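/- (Team-level convergence, non-convex case.) Let E be a finite-dimensional real inner product space, fix a team with N ≥ 1 devices whose losses f_j : E → ℝ are differentiable with L_f-Lipschitz gradient (not necessarily convex), let γ > 2λ > 4L_f ≥ 0, and fix x̄ ∈ E. Define F(w) = (1/N)∑_{j=1}^{N} f̃^λ_j(w) and p(w) = F(w) + (γ/2)‖w − x̄‖² (so F is differentiable and λ-smooth, p is (γ−λ)-strongly convex with unique minimizer prox_{F/γ}(x̄), and min p = F̃^γ(x̄)). Let δ_j ≥ 0, 0 < η ≤ 1/(λ+γ), and K ≥ 1; suppose w⁰ = x̄ and, for each k < K, points θ_j^k ∈ E satisfy ‖θ_j^k − prox_{f_j/λ}(w^k)‖² ≤ δ_j for every j, together with the recursion w^{k+1} = (1 − η(λ+γ)) w^k + ηγ x̄ + (λη/N) ∑_{j=1}^{N} θ_j^k. Then there exists k < K such that ‖w^k − prox_{F/γ}(x̄)‖² ≤ (1/(γ−λ)²) ( (2/(Kη)) ( F(x̄) − F̃^γ(x̄) ) + λ² (1/N) ∑_{j=1}^{N} δ_j ). -/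

import Mathlib

/-!
The team objective `p(w) = F(w) + γ/2‖w - x̄‖²` admits, at every point `v`, the quadratic majorant
with slope `g(v) = λ(v - avg_j prox_{f_j/λ}(v)) + γ(v - x̄)` and curvature `λ + γ`, because each
Moreau envelope is majorized by freezing its minimizer. The iteration is a gradient step along
`g(wᵏ)` up to an error of squared norm at most `λ²·avg δ`, so the usual descent estimate
telescopes to a bound on `min_{k<K} ‖g(wᵏ)‖²`. Finally, since `λ > 2L_f` makes each prox
`2`-Lipschitz, `g` is `(γ - λ)`-strongly monotone and vanishes at the minimizer of `p`, which
turns the bound on `‖g(wᵏ)‖` into one on `‖wᵏ - prox_{F/γ}(x̄)‖`.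
-/

open RealInnerProductSpace

theorem exists_lt_le_of_descent {a b : ℕ → ℝ} {c e m : ℝ} {K : ℕ} (hK : 0 < K) (hc : 0 < c)
    (hstep : ∀ k < K, a (k + 1) + c / 2 * b k ≤ a k + c / 2 * e) (hm : m ≤ a K) :
    ∃ k < K, b k ≤ 2 / (K * c) * (a 0 - m) + e := by
  have htel : c / 2 * ∑ k ∈ Finset.range K, b k ≤ (a 0 - a K) + K * (c / 2 * e) :=
    calc c / 2 * ∑ k ∈ Finset.range K, b k
        ≤ ∑ k ∈ Finset.range K, (a k - a (k + 1) + c / 2 * e) := by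
          rw [Finset.mul_sum]
          exact Finset.sum_le_sum fun k hk => by linarith [hstep k (Finset.mem_range.mp hk)]
      _ = (a 0 - a K) + K * (c / 2 * e) := by
          rw [Finset.sum_add_distrib, Finset.sum_range_sub', Finset.sum_const, Finset.card_range,
            nsmul_eq_mul]
  have hsum : ∑ k ∈ Finset.range K, b k ≤ ∑ k ∈ Finset.range K, (2 / (K * c) * (a 0 - m) + e) := by
    rw [Finset.sum_const, Finset.card_range, nsmul_eq_mul]
    have hKpos : (0 : ℝ) < K := Nat.cast_pos.mpr hK
    refine le_of_mul_le_mul_left ?_ (half_pos hc)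
    calc c / 2 * ∑ k ∈ Finset.range K, b k ≤ (a 0 - m) + K * (c / 2 * e) := by linarith
      _ = c / 2 * (K * (2 / (K * c) * (a 0 - m) + e)) := by field_simp
  obtain ⟨k, hk, hbk⟩ := Finset.exists_le_of_sum_le (Finset.nonempty_range_iff.mpr hK.ne') hsum
  exact ⟨k, Finset.mem_range.mp hk, hbk⟩

section

variable {E : Type*} [NormedAddCommGroup E]

noncomputable def moreauEnvelope (g : E → ℝ) (σ : ℝ) (x : E) : ℝ :=
  ⨅ u, g u + σ / 2 * ‖u - x‖ ^ 2

theorem moreauEnvelope_eq_of_isMinOn {g : E → ℝ} {σ : ℝ} {x z : E}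
    (hz : IsMinOn (fun u => g u + σ / 2 * ‖u - x‖ ^ 2) Set.univ z) :
    moreauEnvelope g σ x = g z + σ / 2 * ‖z - x‖ ^ 2 := by
  have hle := isMinOn_univ_iff.mp hz
  exact le_antisymm (ciInf_le ⟨_, Set.forall_mem_range.mpr hle⟩ z) (le_ciInf hle)

variable [InnerProductSpace ℝ E]

/-- `φ` lies below the paraboloid of slope `G v` and curvature `L` through `(v, φ v)`, for every
`v`; for differentiable `φ` with `L`-Lipschitz gradient this is the descent lemma. -/
def HasQuadraticMajorant (φ : E → ℝ) (G : E → E) (L : ℝ) : Prop :=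
  ∀ v v', φ v' ≤ φ v + ⟪G v, v' - v⟫ + L / 2 * ‖v' - v‖ ^ 2

namespace HasQuadraticMajorant

variable {φ ψ : E → ℝ} {G H : E → E} {L M : ℝ}

theorem add (hφ : HasQuadraticMajorant φ G L) (hψ : HasQuadraticMajorant ψ H M) :
    HasQuadraticMajorant (fun v => φ v + ψ v) (fun v => G v + H v) (L + M) := by
  intro v v'
  have := hφ v v'
  have := hψ v v'
  rw [inner_add_left]
  linarith

theorem const_mul (hφ : HasQuadraticMajorant φ G L) {c : ℝ} (hc : 0 ≤ c) :
    HasQuadraticMajorant (fun v => c * φ v) (fun v => c • G v) (c * L) := by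
  intro v v'
  have := mul_le_mul_of_nonneg_left (hφ v v') hc
  rw [real_inner_smul_left]
  linarith

theorem sum {ι : Type*} (s : Finset ι) {φ : ι → E → ℝ} {G : ι → E → E} {L : ι → ℝ}
    (h : ∀ i ∈ s, HasQuadraticMajorant (φ i) (G i) (L i)) :
    HasQuadraticMajorant (fun v => ∑ i ∈ s, φ i v) (fun v => ∑ i ∈ s, G i v) (∑ i ∈ s, L i) := by
  intro v v'
  calc ∑ i ∈ s, φ i v'
      ≤ ∑ i ∈ s, (φ i v + ⟪G i v, v' - v⟫ + L i / 2 * ‖v' - v‖ ^ 2) :=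
        Finset.sum_le_sum fun i hi => h i hi v v'
    _ = _ := by
        rw [Finset.sum_add_distrib, Finset.sum_add_distrib, sum_inner, Finset.sum_div,
          Finset.sum_mul]

theorem eq_zero_of_isMinOn (hφ : HasQuadraticMajorant φ G L) (hL : 0 < L) {z : E}
    (hz : IsMinOn φ Set.univ z) : G z = 0 := by
  have hstep := hφ z (z - L⁻¹ • G z)
  have hmin := isMinOn_univ_iff.mp hz (z - L⁻¹ • G z)
  rw [sub_sub_cancel_left, inner_neg_right, real_inner_smul_right, real_inner_self_eq_norm_sq,
    norm_neg, norm_smul, mul_pow, Real.norm_eq_abs, sq_abs] at hstep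
  have hdrop : L⁻¹ / 2 * ‖G z‖ ^ 2 ≤ 0 := by
    have : L / 2 * (L⁻¹ ^ 2 * ‖G z‖ ^ 2) = L⁻¹ / 2 * ‖G z‖ ^ 2 := by field_simp
    linarith
  have hnorm : ‖G z‖ ^ 2 = 0 :=
    le_antisymm (nonpos_of_mul_nonpos_right hdrop (by positivity)) (sq_nonneg _)
  simpa using hnorm

theorem le_sub_smul (hφ : HasQuadraticMajorant φ G L) {η : ℝ} (hη0 : 0 ≤ η) (hηL : η * L ≤ 1)
    (v d : E) :
    φ (v - η • d) + η / 2 * ‖G v‖ ^ 2 ≤ φ v + η / 2 * ‖G v - d‖ ^ 2 := by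
  have hstep := hφ v (v - η • d)
  rw [sub_sub_cancel_left, inner_neg_right, real_inner_smul_right, norm_neg, norm_smul, mul_pow,
    Real.norm_eq_abs, sq_abs] at hstep
  have hcurv : L / 2 * (η ^ 2 * ‖d‖ ^ 2) ≤ η / 2 * ‖d‖ ^ 2 := by
    have := mul_nonneg (mul_nonneg hη0 (sq_nonneg ‖d‖)) (sub_nonneg.mpr hηL)
    nlinarith
  nlinarith [norm_sub_sq_real (G v) d]

theorem exists_lt_sq_norm_le_of_inexact_steps (hφ : HasQuadraticMajorant φ G L) {η e : ℝ}
    (hη0 : 0 < η) (hηL : η * L ≤ 1) {K : ℕ} (hK : 0 < K) {w d : ℕ → E}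
    (hw : ∀ k < K, w (k + 1) = w k - η • d k) (hd : ∀ k < K, ‖G (w k) - d k‖ ^ 2 ≤ e) {z : E}
    (hz : IsMinOn φ Set.univ z) :
    ∃ k < K, ‖G (w k)‖ ^ 2 ≤ 2 / (K * η) * (φ (w 0) - φ z) + e := by
  refine exists_lt_le_of_descent (a := fun k => φ (w k)) hK hη0 (fun k hk => ?_)
    (isMinOn_univ_iff.mp hz (w K))
  rw [hw k hk]
  exact (hφ.le_sub_smul hη0.le hηL (w k) (d k)).trans (by gcongr; exact hd k hk)

end HasQuadraticMajorant

theorem hasQuadraticMajorant_sq_norm_sub (σ : ℝ) (a : E) :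
    HasQuadraticMajorant (fun u => σ / 2 * ‖u - a‖ ^ 2) (fun u => σ • (u - a)) σ := by
  intro v v'
  have hsplit : v' - a = (v' - v) + (v - a) := by abel
  simp only
  rw [hsplit, norm_add_sq_real, real_inner_smul_left, real_inner_comm]
  linarith

section Prox

variable {g : E → ℝ} {σ : ℝ}

/-- Bound the infimum defining the envelope at `v'` by its value at `P v`. -/
theorem hasQuadraticMajorant_moreauEnvelope {P : E → E}
    (hP : ∀ x, IsMinOn (fun u => g u + σ / 2 * ‖u - x‖ ^ 2) Set.univ (P x)) :
    HasQuadraticMajorant (moreauEnvelope g σ) (fun x => σ • (x - P x)) σ := by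
  intro v v'
  rw [moreauEnvelope_eq_of_isMinOn (hP v), moreauEnvelope_eq_of_isMinOn (hP v')]
  have hfrozen := isMinOn_univ_iff.mp (hP v') (P v)
  have hsplit : P v - v' = -((v - P v) + (v' - v)) := by abel
  rw [hsplit, norm_neg, norm_add_sq_real] at hfrozen
  rw [real_inner_smul_left, norm_sub_rev (P v) v]
  linarith

variable [CompleteSpace E]

theorem gradient_eq_of_isMinOn_prox (hg : Differentiable ℝ g) {x z : E}
    (hz : IsMinOn (fun u => g u + σ / 2 * ‖u - x‖ ^ 2) Set.univ z) :
    gradient g z = σ • (x - z) := by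
  have hderiv := ((hg z).hasGradientAt.hasFDerivAt).add
    ((((hasFDerivAt_id z).sub_const x).norm_sq).const_mul (σ / 2))
  have hzero := (hz.isLocalMin Filter.univ_mem).hasFDerivAt_eq_zero hderiv
  have horth : ∀ y, ⟪gradient g z + σ • (z - x), y⟫ = 0 := fun y => by
    have := congrArg (· y) hzero
    simp only [id_eq, ContinuousLinearMap.comp_id, add_apply, smul_apply,
      InnerProductSpace.toDual_apply_apply, innerSL_apply_apply, zero_apply, smul_eq_mul,
      nsmul_eq_mul] at this
    rw [inner_add_left, real_inner_smul_left]
    linarith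
  rw [← sub_eq_zero, ← inner_self_eq_zero.mp (horth _)]
  module

theorem sub_mul_norm_sub_le_of_isMinOn_prox (hg : Differentiable ℝ g) {L : ℝ}
    (hlip : ∀ x y, ‖gradient g x - gradient g y‖ ≤ L * ‖x - y‖) (hσ : 0 ≤ σ) {x x' z z' : E}
    (hz : IsMinOn (fun u => g u + σ / 2 * ‖u - x‖ ^ 2) Set.univ z)
    (hz' : IsMinOn (fun u => g u + σ / 2 * ‖u - x'‖ ^ 2) Set.univ z') :
    (σ - L) * ‖z - z'‖ ≤ σ * ‖x - x'‖ := by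
  have hgrad : gradient g z - gradient g z' = σ • ((x - x') - (z - z')) := by
    rw [gradient_eq_of_isMinOn_prox hg hz, gradient_eq_of_isMinOn_prox hg hz']
    module
  have hinner : ⟪gradient g z - gradient g z', z - z'⟫
      = σ * ⟪x - x', z - z'⟫ - σ * ‖z - z'‖ ^ 2 := by
    rw [hgrad, real_inner_smul_left, inner_sub_left, real_inner_self_eq_norm_sq]
    ring
  have hlow : -(L * ‖z - z'‖ * ‖z - z'‖) ≤ ⟪gradient g z - gradient g z', z - z'⟫ :=
    (neg_le_neg (mul_le_mul_of_nonneg_right (hlip z z') (norm_nonneg _))).trans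
      (abs_le.mp (abs_real_inner_le_norm _ _)).1
  have hup := mul_le_mul_of_nonneg_left (real_inner_le_norm (x - x') (z - z')) hσ
  have hsq : (σ - L) * ‖z - z'‖ * ‖z - z'‖ ≤ σ * ‖x - x'‖ * ‖z - z'‖ := by nlinarith
  rcases (norm_nonneg (z - z')).eq_or_lt with hzero | hpos
  · rw [← hzero, mul_zero]
    positivity
  · exact le_of_mul_le_mul_right hsq hpos

theorem norm_sub_le_two_mul_of_isMinOn_prox (hg : Differentiable ℝ g) {L : ℝ}
    (hlip : ∀ x y, ‖gradient g x - gradient g y‖ ≤ L * ‖x - y‖) (hσ : 0 < σ) (hL : 2 * L ≤ σ)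
    {x x' z z' : E}
    (hz : IsMinOn (fun u => g u + σ / 2 * ‖u - x‖ ^ 2) Set.univ z)
    (hz' : IsMinOn (fun u => g u + σ / 2 * ‖u - x'‖ ^ 2) Set.univ z') :
    ‖z - z'‖ ≤ 2 * ‖x - x'‖ := by
  have h := sub_mul_norm_sub_le_of_isMinOn_prox hg hlip hσ.le hz hz'
  have hslack := mul_nonneg (sub_nonneg.mpr hL) (norm_nonneg (z - z'))
  refine le_of_mul_le_mul_left ?_ hσ
  nlinarith

end Prox

theorem mul_norm_le_norm_of_mul_sq_le_inner {μ : ℝ} {a d : E} (h : μ * ‖d‖ ^ 2 ≤ ⟪a, d⟫) :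
    μ * ‖d‖ ≤ ‖a‖ := by
  rcases (norm_nonneg d).eq_or_lt with hzero | hpos
  · rw [← hzero, mul_zero]
    positivity
  · refine le_of_mul_le_mul_right ?_ hpos
    nlinarith [real_inner_le_norm a d]

theorem sq_norm_smul_sum_le {N : ℕ} (u : Fin N → E) :
    ‖(1 / (N : ℝ)) • ∑ j, u j‖ ^ 2 ≤ (1 / (N : ℝ)) * ∑ j, ‖u j‖ ^ 2 := by
  have hcs : (∑ j, ‖u j‖) ^ 2 ≤ N * ∑ j, ‖u j‖ ^ 2 := by
    simpa using sq_sum_le_card_mul_sum_sq (s := Finset.univ) (f := fun j => ‖u j‖)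
  rw [norm_smul, mul_pow, Real.norm_of_nonneg (by positivity)]
  calc (1 / (N : ℝ)) ^ 2 * ‖∑ j, u j‖ ^ 2
      ≤ (1 / (N : ℝ)) ^ 2 * (N * ∑ j, ‖u j‖ ^ 2) := by
        gcongr
        exact (pow_le_pow_left₀ (norm_nonneg _) (norm_sum_le _ _) 2).trans hcs
    _ = (1 / (N : ℝ)) * ∑ j, ‖u j‖ ^ 2 := by
        rcases N.eq_zero_or_pos with rfl | hN
        · simp
        · field_simp

section Team

variable {N : ℕ}

/-- For `Pⱼ = prox_{fⱼ/λ}` this is the slope of the majorant of `F + γ/2‖· - x̄‖²`; for `Pⱼ`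
constant equal to `θⱼᵏ` it is the step direction of the iteration. -/
noncomputable def teamSlope (P : Fin N → E → E) (lam gam : ℝ) (xbar v : E) : E :=
  lam • (v - (1 / (N : ℝ)) • ∑ j, P j v) + gam • (v - xbar)

variable {lam gam : ℝ} {xbar : E}

theorem hasQuadraticMajorant_teamSlope (hN : N ≠ 0) {f : Fin N → E → ℝ} {P : Fin N → E → E}
    (hP : ∀ j x, IsMinOn (fun u => f j u + lam / 2 * ‖u - x‖ ^ 2) Set.univ (P j x)) :
    HasQuadraticMajorant
      (fun u => (1 / (N : ℝ)) * ∑ j, moreauEnvelope (f j) lam u + gam / 2 * ‖u - xbar‖ ^ 2)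
      (teamSlope P lam gam xbar) (lam + gam) := by
  have hF := (HasQuadraticMajorant.sum Finset.univ fun j _ =>
    hasQuadraticMajorant_moreauEnvelope (hP j)).const_mul (c := 1 / (N : ℝ)) (by positivity)
  convert hF.add (hasQuadraticMajorant_sq_norm_sub gam xbar) using 2
  · rw [teamSlope, ← Finset.smul_sum, Finset.sum_sub_distrib, Finset.sum_const, Finset.card_univ,
      Fintype.card_fin, ← Nat.cast_smul_eq_nsmul ℝ]
    match_scalars <;> field_simp
  · simp [hN]

theorem sq_norm_teamSlope_sub_le (P Q : Fin N → E → E) (v : E) :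
    ‖teamSlope P lam gam xbar v - teamSlope Q lam gam xbar v‖ ^ 2
      ≤ lam ^ 2 * ((1 / (N : ℝ)) * ∑ j, ‖Q j v - P j v‖ ^ 2) := by
  have hdiff : teamSlope P lam gam xbar v - teamSlope Q lam gam xbar v
      = lam • (1 / (N : ℝ)) • ∑ j, (Q j v - P j v) := by
    simp only [teamSlope, Finset.sum_sub_distrib]
    module
  rw [hdiff, norm_smul, mul_pow, Real.norm_eq_abs, sq_abs]
  gcongr
  exact sq_norm_smul_sum_le _

theorem mul_sq_norm_sub_le_inner_teamSlope {P : Fin N → E → E}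
    (hP : ∀ j v v', ‖P j v - P j v'‖ ≤ 2 * ‖v - v'‖) (hlam : 0 ≤ lam) (v z : E) :
    (gam - lam) * ‖v - z‖ ^ 2
      ≤ ⟪teamSlope P lam gam xbar v - teamSlope P lam gam xbar z, v - z⟫ := by
  set A : E := (1 / (N : ℝ)) • ∑ j, (P j v - P j z)
  have hA : ‖A‖ ≤ 2 * ‖v - z‖ := by
    calc ‖A‖ ≤ (1 / (N : ℝ)) * ∑ j : Fin N, 2 * ‖v - z‖ := by
          rw [norm_smul, Real.norm_of_nonneg (by positivity)]
          gcongr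
          exact (norm_sum_le _ _).trans (Finset.sum_le_sum fun j _ => hP j v z)
      _ ≤ 2 * ‖v - z‖ := by
          rw [Finset.sum_const, Finset.card_univ, Fintype.card_fin, nsmul_eq_mul, ← mul_assoc]
          refine mul_le_of_le_one_left (by positivity) ?_
          rcases N.eq_zero_or_pos with rfl | hN
          · simp
          · rw [one_div_mul_cancel (by positivity)]
  have hdiff : teamSlope P lam gam xbar v - teamSlope P lam gam xbar z
      = (lam + gam) • (v - z) - lam • A := by
    simp only [teamSlope, A, Finset.sum_sub_distrib]
    module
  rw [hdiff, inner_sub_left, real_inner_smul_left, real_inner_smul_left,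
    real_inner_self_eq_norm_sq]
  have hcs := (real_inner_le_norm A (v - z)).trans
    (mul_le_mul_of_nonneg_right hA (norm_nonneg _))
  nlinarith [mul_le_mul_of_nonneg_left hcs hlam]

end Team

end

theorem permfl_team_convergence_nonconvex_general
    {E : Type*} [NormedAddCommGroup E] [InnerProductSpace ℝ E] [FiniteDimensional ℝ E]
    {N : ℕ} (hN : 1 ≤ N) (f : Fin N → E → ℝ)
    (Lf lam gam : ℝ) (hLf : 0 ≤ Lf) (h1 : 4 * Lf < 2 * lam) (h2 : 2 * lam < gam)
    (hdiff : ∀ j, Differentiable ℝ (f j))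
    (hlip : ∀ j, ∀ x y : E, ‖gradient (f j) x - gradient (f j) y‖ ≤ Lf * ‖x - y‖)
    (xbar : E)
    (F : E → ℝ)
    (hF : ∀ w : E,
      F w = (1 / (N : ℝ)) * ∑ j : Fin N, ⨅ θ : E, (f j θ + lam / 2 * ‖θ - w‖ ^ 2))
    (proxf : Fin N → E → E)
    (hproxf : ∀ j (v : E),
      IsMinOn (fun θ : E => f j θ + lam / 2 * ‖θ - v‖ ^ 2) Set.univ (proxf j v))
    (proxF : E)
    (hproxF : IsMinOn (fun u : E => F u + gam / 2 * ‖u - xbar‖ ^ 2) Set.univ proxF)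
    (δ : Fin N → ℝ)
    (η : ℝ) (hη0 : 0 < η) (hη : η ≤ 1 / (lam + gam))
    (K : ℕ) (hK : 1 ≤ K) (w : ℕ → E) (θ : Fin N → ℕ → E)
    (hw0 : w 0 = xbar)
    (hθ : ∀ j, ∀ k < K, ‖θ j k - proxf j (w k)‖ ^ 2 ≤ δ j)
    (hrec : ∀ k < K,
      w (k + 1) = (1 - η * (lam + gam)) • w k + (η * gam) • xbar
        + ((lam * η) / (N : ℝ)) • ∑ j : Fin N, θ j k) :
    ∃ k < K,
      ‖w k - proxF‖ ^ 2
        ≤ (1 / (gam - lam) ^ 2)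
            * ((2 / ((K : ℝ) * η))
                  * (F xbar - ⨅ u : E, (F u + gam / 2 * ‖u - xbar‖ ^ 2))
                + lam ^ 2 * ((1 / (N : ℝ)) * ∑ j : Fin N, δ j)) := by
  have hlam : 0 < lam := by linarith
  set g := teamSlope proxf lam gam xbar
  have hmaj : HasQuadraticMajorant (fun u => F u + gam / 2 * ‖u - xbar‖ ^ 2) g (lam + gam) := by
    rw [show F = fun u => (1 / (N : ℝ)) * ∑ j, moreauEnvelope (f j) lam u from funext hF]
    exact hasQuadraticMajorant_teamSlope (by omega) hproxf
  have hg0 : g proxF = 0 := hmaj.eq_zero_of_isMinOn (by linarith) hproxF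
  obtain ⟨k, hk, hbound⟩ := hmaj.exists_lt_sq_norm_le_of_inexact_steps hη0
    (by rwa [le_div_iff₀ (by linarith)] at hη) hK (e := lam ^ 2 * ((1 / (N : ℝ)) * ∑ j, δ j))
    (d := fun k => teamSlope (fun j _ => θ j k) lam gam xbar (w k))
    (fun k hk => by rw [hrec k hk]; simp only [teamSlope]; module)
    (fun k hk => (sq_norm_teamSlope_sub_le _ _ _).trans (by gcongr with j; exact hθ j k hk))
    hproxF
  have hcoercive : (gam - lam) * ‖w k - proxF‖ ≤ ‖g (w k)‖ := by
    have hprox2 : ∀ j v v', ‖proxf j v - proxf j v'‖ ≤ 2 * ‖v - v'‖ := fun j v v' =>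
      norm_sub_le_two_mul_of_isMinOn_prox (hdiff j) (hlip j) hlam (by linarith) (hproxf j v)
        (hproxf j v')
    rw [← sub_zero (g (w k)), ← hg0]
    exact mul_norm_le_norm_of_mul_sq_le_inner
      (mul_sq_norm_sub_le_inner_teamSlope hprox2 hlam.le _ _)
  refine ⟨k, hk, ?_⟩
  rw [hw0, show F xbar + gam / 2 * ‖xbar - xbar‖ ^ 2 = F xbar by simp] at hbound
  rw [show (⨅ u, F u + gam / 2 * ‖u - xbar‖ ^ 2) = _ from moreauEnvelope_eq_of_isMinOn hproxF, one_div_mul_eq_div, le_div_iff₀ (pow_pos (by linarith) 2)]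
  calc ‖w k - proxF‖ ^ 2 * (gam - lam) ^ 2 = ((gam - lam) * ‖w k - proxF‖) ^ 2 := by ring
    _ ≤ ‖g (w k)‖ ^ 2 :=
      pow_le_pow_left₀ (mul_nonneg (by linarith) (norm_nonneg _)) hcoercive 2
    _ ≤ _ := hbound

/-- **Team-level convergence of PerMFL, non-convex case.**
Fix a team of `N ≥ 1` devices with `L_f`-smooth (not necessarily convex) losses
`f j : E → ℝ`, `γ > 2λ > 4L_f ≥ 0`, anchor `x̄`, team objective
`F(w) = (1/N)∑ⱼ f̃ⱼ^λ(w)`.  With errors `δⱼ ≥ 0`, step size `0 < η ≤ 1/(λ+γ)`,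
`K ≥ 1`, initialization `w⁰ = x̄`, device approximations
`‖θⱼᵏ − prox_{fⱼ/λ}(wᵏ)‖² ≤ δⱼ`, and recursion
`w^{k+1} = (1 − η(λ+γ))wᵏ + ηγ x̄ + (λη/N)∑ⱼ θⱼᵏ` for `k < K`, there exists
`k < K` with `‖wᵏ − prox_{F/γ}(x̄)‖²
≤ (1/(γ−λ)²)((2/(Kη))(F(x̄) − F̃^γ(x̄)) + λ²(1/N)∑ⱼ δⱼ)`. -/
theorem permfl_team_convergence_nonconvex
    {E : Type*} [NormedAddCommGroup E] [InnerProductSpace ℝ E] [FiniteDimensional ℝ E]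
    {N : ℕ} (hN : 1 ≤ N) (f : Fin N → E → ℝ)
    (Lf lam gam : ℝ) (hLf : 0 ≤ Lf) (h1 : 4 * Lf < 2 * lam) (h2 : 2 * lam < gam)
    (hdiff : ∀ j, Differentiable ℝ (f j))
    (hlip : ∀ j, ∀ x y : E, ‖gradient (f j) x - gradient (f j) y‖ ≤ Lf * ‖x - y‖)
    (xbar : E)
    (F : E → ℝ)
    (hF : ∀ w : E,
      F w = (1 / (N : ℝ)) * ∑ j : Fin N, ⨅ θ : E, (f j θ + lam / 2 * ‖θ - w‖ ^ 2))
    (proxf : Fin N → E → E)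
    (hproxf : ∀ j (v : E),
      IsMinOn (fun θ : E => f j θ + lam / 2 * ‖θ - v‖ ^ 2) Set.univ (proxf j v))
    (proxF : E)
    (hproxF : IsMinOn (fun u : E => F u + gam / 2 * ‖u - xbar‖ ^ 2) Set.univ proxF)
    (δ : Fin N → ℝ) (hδ : ∀ j, 0 ≤ δ j)
    (η : ℝ) (hη0 : 0 < η) (hη : η ≤ 1 / (lam + gam))
    (K : ℕ) (hK : 1 ≤ K) (w : ℕ → E) (θ : Fin N → ℕ → E)
    (hw0 : w 0 = xbar)
    (hθ : ∀ j, ∀ k < K, ‖θ j k - proxf j (w k)‖ ^ 2 ≤ δ j)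
    (hrec : ∀ k < K,
      w (k + 1) = (1 - η * (lam + gam)) • w k + (η * gam) • xbar
        + ((lam * η) / (N : ℝ)) • ∑ j : Fin N, θ j k) :
    ∃ k < K,
      ‖w k - proxF‖ ^ 2
        ≤ (1 / (gam - lam) ^ 2)
            * ((2 / ((K : ℝ) * η))
                  * (F xbar - ⨅ u : E, (F u + gam / 2 * ‖u - xbar‖ ^ 2))
                + lam ^ 2 * ((1 / (N : ℝ)) * ∑ j : Fin N, δ j)) :=
  permfl_team_convergence_nonconvex_general hN f Lf lam gam hLf h1 h2 hdiff hlip xbar F hF proxf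
    hproxf proxF hproxF δ η hη0 hη K hK w θ hw0 hθ hrec
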